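/- For any d ≥ 3 and any two distinct feature indices i ≠ j in [d], the sum over all subsets S of [d] with 1 ≤ |S| ≤ d−1 containing both i and j of k(S) = (d−1)/(binom(d,|S|)·|S|·(d−|S|)) equals ((d−1)·H_{d−2} − (d−2))/d. -/

import Mathlib

/-!
A set `S ⊇ {i, j}` is `{i, j} ∪ T` with `T` ranging over the subsets of the other `d - 2`
indices, and the kernel depends only on `|S| = |T| + 2`. Grouping by `t = |T|` gives the sum
`∑_{t < d-2} C(d-2, t) k(t+2)`, and since `C(d-2, t) / C(d, t+2) = (t+2)(t+1) / (d(d-1))`,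
each term is `(t+1) / (d (d-2-t))`. Substituting `m = d-2-t` turns it into
`((d-1)/m - 1) / d`, whose sum over `1 ≤ m ≤ d-2` is `((d-1) H_{d-2} - (d-2)) / d`.
-/

open Finset

theorem Finset.sum_filter_superset_apply_card {α M : Type*} [Fintype α] [DecidableEq α]
    [AddCommMonoid M] (A : Finset α) (f : ℕ → M) :
    ∑ S with A ⊆ S, f #S =
      ∑ t ∈ range (Fintype.card α - #A + 1), (Fintype.card α - #A).choose t • f (#A + t) := by
  rw [← card_compl, ← sum_powerset_apply_card fun t ↦ f (#A + t)]
  refine sum_nbij' (· \ A) (· ∪ A) (fun S _ ↦ by simp [subset_iff]) (fun T _ ↦ by simp)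
    (fun S hS ↦ by simp_all) (fun T hT ↦ ?_) (fun S hS ↦ ?_)
  · rw [mem_powerset, subset_compl_iff_disjoint_right] at hT
    exact union_sdiff_cancel_right hT
  · rw [mem_filter_univ] at hS
    rw [card_sdiff_of_subset hS, Nat.add_sub_cancel' (card_le_card hS)]

noncomputable def shapleyKernel (d s : ℕ) : ℝ := (d - 1) / (d.choose s * s * (d - s))

/-- The denominator vanishes for `s ≥ d`, so with `x / 0 = 0` the kernel is zero there; this is
what makes the constraint `|S| ≤ d - 1` removable. -/
theorem shapleyKernel_eq_zero_of_le {d s : ℕ} (h : d ≤ s) : shapleyKernel d s = 0 := by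
  rcases h.eq_or_lt with rfl | h
  · simp [shapleyKernel]
  · simp [shapleyKernel, Nat.choose_eq_zero_of_lt h]

theorem choose_mul_shapleyKernel {n t : ℕ} (h : t < n) :
    n.choose t * shapleyKernel (n + 2) (t + 2) = (t + 1) / ((n + 2) * (n - t)) := by
  have hchoose : ((n + 2).choose (t + 2) : ℝ) * ((t + 2) * (t + 1))
      = (n + 2) * (n + 1) * n.choose t := by
    have := congrArg (Nat.cast (R := ℝ)) (Nat.choose_mul (n := n + 2) (k := t + 2) (s := 2)
      (by omega))
    push_cast [Nat.cast_choose_two, Nat.add_sub_cancel] at this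
    linear_combination 2 * this
  have hpos : (0 : ℝ) < (n + 2).choose (t + 2) := mod_cast Nat.choose_pos (by omega)
  have hnt : (0 : ℝ) < n - t := sub_pos.2 (mod_cast h)
  unfold shapleyKernel
  push_cast
  rw [show ((n : ℝ) + 2) - (t + 2) = n - t by ring, mul_div_assoc',
    div_eq_div_iff (by positivity) (by positivity)]
  linear_combination (t - n : ℝ) * hchoose

theorem sum_range_add_one_div_sub (n : ℕ) :
    ∑ t ∈ range n, ((t : ℝ) + 1) / (n - t) = (n + 1) * ∑ k ∈ Icc 1 n, (1 : ℝ) / k - n := by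
  have hIcc : ∑ k ∈ Icc 1 n, (1 : ℝ) / k = ∑ j ∈ range n, 1 / ((j : ℝ) + 1) := by
    rw [← Ico_add_one_right_eq_Icc, sum_Ico_eq_sum_range]
    simp [add_comm]
  have hterm : ∀ j ∈ range n, (((n - 1 - j : ℕ) : ℝ) + 1) / (n - (n - 1 - j : ℕ))
      = (n + 1) * (1 / ((j : ℝ) + 1)) - 1 := by
    intro j hj
    rw [mem_range] at hj
    rw [Nat.cast_sub (by omega), Nat.cast_sub (by omega), Nat.cast_one,
      show (n : ℝ) - (n - 1 - j) = j + 1 by ring]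
    field_simp
    ring
  rw [← sum_range_reflect, sum_congr rfl hterm, sum_sub_distrib, ← mul_sum, hIcc]
  simp

theorem stmt_1_general (d : ℕ) (i j : Fin d) (hij : i ≠ j) :
    ∑ S ∈ Finset.univ.filter
        (fun S : Finset (Fin d) => i ∈ S ∧ j ∈ S ∧ 1 ≤ S.card ∧ S.card ≤ d - 1),
      ((d : ℝ) - 1) / ((d.choose S.card : ℝ) * (S.card : ℝ) * ((d : ℝ) - (S.card : ℝ)))
      = (((d : ℝ) - 1) * (∑ k ∈ Finset.Icc 1 (d - 2), (1 : ℝ) / (k : ℝ)) - ((d : ℝ) - 2))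
          / (d : ℝ) := by
  obtain ⟨n, rfl⟩ : ∃ n, d = n + 2 := ⟨d - 2, by have := Fin.val_ne_of_ne hij; omega⟩
  calc _ = ∑ S with {i, j} ⊆ S, shapleyKernel (n + 2) #S := by
        refine sum_subset (fun S hS ↦ ?_) fun S hS hS' ↦ shapleyKernel_eq_zero_of_le ?_
        · simp only [mem_filter_univ, insert_subset_iff, singleton_subset_iff] at hS ⊢
          exact ⟨hS.1, hS.2.1⟩
        · rw [mem_filter_univ, insert_subset_iff, singleton_subset_iff] at hS
          have : 1 ≤ #S := card_pos.2 ⟨i, hS.1⟩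
          simp only [mem_filter_univ, hS, true_and, not_and, not_le] at hS'
          omega
    _ = ∑ t ∈ range (n + 1), n.choose t • shapleyKernel (n + 2) (2 + t) := by
        rw [sum_filter_superset_apply_card, card_pair hij, Fintype.card_fin, Nat.add_sub_cancel]
    _ = ∑ t ∈ range n, ((t : ℝ) + 1) / ((n + 2) * (n - t)) := by
        rw [sum_range_succ, shapleyKernel_eq_zero_of_le (by omega), smul_zero, add_zero]
        refine sum_congr rfl fun t ht ↦ ?_
        rw [nsmul_eq_mul, add_comm 2 t, choose_mul_shapleyKernel (mem_range.1 ht)]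
    _ = _ := by
        simp_rw [mul_comm ((n : ℝ) + 2), ← div_div, ← sum_div, sum_range_add_one_div_sub]
        push_cast
        ring

/-- For any `d ≥ 3` and distinct `i ≠ j`, the sum over all subsets `S` of `[d]` with
`1 ≤ |S| ≤ d-1` containing both `i` and `j` of `k(S) = (d-1)/(C(d,|S|)·|S|·(d-|S|))`
equals `((d-1)·H_{d-2} - (d-2))/d`. -/
theorem stmt_1 (d : ℕ) (hd : 3 ≤ d) (i j : Fin d) (hij : i ≠ j) :
    ∑ S ∈ Finset.univ.filter
        (fun S : Finset (Fin d) => i ∈ S ∧ j ∈ S ∧ 1 ≤ S.card ∧ S.card ≤ d - 1),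
      ((d : ℝ) - 1) / ((d.choose S.card : ℝ) * (S.card : ℝ) * ((d : ℝ) - (S.card : ℝ)))
      = (((d : ℝ) - 1) * (∑ k ∈ Finset.Icc 1 (d - 2), (1 : ℝ) / (k : ℝ)) - ((d : ℝ) - 2))
          / (d : ℝ) :=
  stmt_1_general d i j hij
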